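/- For every integer k ≥ 0, the Sinkhorn iterates satisfy Δ_{k+1} ≤ Λ_k, i.e., max{‖u^{k+1} − u*‖∞, ‖v^{k+1} − v*‖∞} ≤ τ·(τ/(τ+η))^k·R. -/

import Mathlib

/-!
With `c = ητ/(η+τ)` and `LSE f = log ∑ exp f`, first-order optimality of `h` in each
coordinate of `u` gives `u* = c (log a - LSE ((v* - C)/η))`, and symmetrically for `v*`. By
shift invariance of `LSE`, the Sinkhorn update has the same closed form,
`u^{k+1} = c (log a - LSE ((v^k - C)/η))`. Since `LSE` is 1-Lipschitz for the sup norm, every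
half step contracts the error of the updated block by `c/η = τ/(τ+η)`, so after `k + 1` half
steps both errors are at most `(τ/(τ+η))^k ‖v⁰ - v*‖ = (τ/(τ+η))^k ‖v*‖`. Finally, bounding
`LSE` between `log n - (‖v‖ + ‖C‖)/η` and `log n + ‖v‖/η` in the fixed-point equations yields
`m ≤ c (R + m/η)` for `m = max ‖u*‖ ‖v*‖`, that is, `m ≤ τ R`.
-/

/-- The dual entropic regularized UOT objective. -/
noncomputable def dualUOT {n : ℕ} (a b : Fin n → ℝ) (C : Fin n → Fin n → ℝ)
    (τ η : ℝ) (u v : Fin n → ℝ) : ℝ :=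
  η * ∑ i, ∑ j, Real.exp ((u i + v j - C i j) / η)
    + τ * ∑ i, a i * Real.exp (-(u i) / τ)
    + τ * ∑ j, b j * Real.exp (-(v j) / τ)

open Finset Real

noncomputable def logSumExp {ι : Type*} [Fintype ι] (f : ι → ℝ) : ℝ := log (∑ i, exp (f i))

section LogSumExp

variable {ι : Type*} [Fintype ι] [Nonempty ι]

lemma logSumExp_le_of_le_add {f g : ι → ℝ} {d : ℝ} (h : ∀ i, f i ≤ g i + d) :
    logSumExp f ≤ logSumExp g + d := by
  have hg : 0 < ∑ i, exp (g i) := sum_pos (fun i _ => exp_pos _) univ_nonempty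
  have hsum : ∑ i, exp (f i) ≤ (∑ i, exp (g i)) * exp d := by
    rw [sum_mul]
    exact sum_le_sum fun i _ => by rw [← exp_add]; exact exp_le_exp.2 (h i)
  calc logSumExp f ≤ log ((∑ i, exp (g i)) * exp d) :=
        log_le_log (sum_pos (fun i _ => exp_pos _) univ_nonempty) hsum
    _ = logSumExp g + d := by rw [log_mul hg.ne' (exp_ne_zero d), log_exp, logSumExp]

lemma logSumExp_const_add (s : ℝ) (f : ι → ℝ) :
    logSumExp (fun i => s + f i) = s + logSumExp f := by
  have hle := logSumExp_le_of_le_add (f := fun i => s + f i) (g := f) (d := s)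
    fun i => (add_comm _ _).le
  have hge := logSumExp_le_of_le_add (f := f) (g := fun i => s + f i) (d := -s)
    fun i => by linarith
  linarith

lemma logSumExp_const (c : ℝ) : logSumExp (fun _ : ι => c) = log (Fintype.card ι) + c := by
  rw [logSumExp, sum_const, card_univ, nsmul_eq_mul,
    log_mul (Nat.cast_ne_zero.2 Fintype.card_ne_zero) (exp_ne_zero c), log_exp]

lemma log_card_add_le_logSumExp {f : ι → ℝ} {m : ℝ} (h : ∀ i, m ≤ f i) :
    log (Fintype.card ι) + m ≤ logSumExp f := by
  simpa [logSumExp_const] using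
    logSumExp_le_of_le_add (f := fun _ => m) (g := f) (d := 0) (by simpa using h)

lemma logSumExp_le_log_card_add {f : ι → ℝ} {M : ℝ} (h : ∀ i, f i ≤ M) :
    logSumExp f ≤ log (Fintype.card ι) + M := by
  simpa [logSumExp_const] using
    logSumExp_le_of_le_add (f := f) (g := fun _ => M) (d := 0) (by simpa using h)

lemma abs_logSumExp_sub_le (f g : ι → ℝ) : |logSumExp f - logSumExp g| ≤ ‖f - g‖ := by
  have key : ∀ f g : ι → ℝ, logSumExp f ≤ logSumExp g + ‖f - g‖ := fun f g =>
    logSumExp_le_of_le_add fun i => by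
      have := norm_le_pi_norm (f - g) i
      rw [Real.norm_eq_abs, Pi.sub_apply] at this
      linarith [le_abs_self (f i - g i)]
  rw [abs_sub_le_iff]
  exact ⟨by linarith [key f g], by linarith [key g f, norm_sub_rev f g]⟩

end LogSumExp

noncomputable def sinkhornStep {ι κ : Type*} [Fintype κ] (τ η : ℝ) (a : ι → ℝ) (C : ι → κ → ℝ)
    (v : κ → ℝ) : ι → ℝ :=
  fun i => η * τ / (η + τ) * (log (a i) - logSumExp fun j => (v j - C i j) / η)

section SinkhornStep

variable {ι κ : Type*} [Fintype ι] [Fintype κ] [Nonempty κ] {τ η : ℝ}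

lemma norm_sinkhornStep_sub_le (hτ : 0 < τ) (hη : 0 < η) (a : ι → ℝ) (C : ι → κ → ℝ)
    (v v' : κ → ℝ) :
    ‖sinkhornStep τ η a C v - sinkhornStep τ η a C v'‖ ≤ τ / (τ + η) * ‖v - v'‖ := by
  refine (pi_norm_le_iff_of_nonneg (by positivity)).2 fun i => ?_
  have hlip : ‖(fun j => (v j - C i j) / η) - fun j => (v' j - C i j) / η‖ ≤ ‖v - v'‖ / η := by
    refine (pi_norm_le_iff_of_nonneg (by positivity)).2 fun j => ?_
    rw [Pi.sub_apply, ← sub_div, sub_sub_sub_cancel_right, norm_div, Real.norm_of_nonneg hη.le]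
    exact div_le_div_of_nonneg_right (norm_le_pi_norm (v - v') j) hη.le
  calc ‖(sinkhornStep τ η a C v - sinkhornStep τ η a C v') i‖
      = η * τ / (η + τ) * |logSumExp (fun j => (v j - C i j) / η)
          - logSumExp fun j => (v' j - C i j) / η| := by
        rw [Pi.sub_apply, sinkhornStep, sinkhornStep, Real.norm_eq_abs, ← mul_sub, abs_mul,
          abs_of_pos (by positivity), sub_sub_sub_cancel_left, abs_sub_comm]
    _ ≤ η * τ / (η + τ) * (‖v - v'‖ / η) := by
        gcongr
        exact (abs_logSumExp_sub_le _ _).trans hlip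
    _ = τ / (τ + η) * ‖v - v'‖ := by field_simp; ring

lemma norm_sinkhornStep_le (hτ : 0 < τ) (hη : 0 < η) {C : ι → κ → ℝ} {M : ℝ}
    (hC : ∀ i j, 0 ≤ C i j) (hCM : ∀ i j, C i j ≤ M) (a : ι → ℝ) (v : κ → ℝ) :
    ‖sinkhornStep τ η a C v‖ ≤ η * τ / (η + τ) *
      (‖fun i => log (a i)‖ + max (log (Fintype.card κ)) (M / η - log (Fintype.card κ))
        + ‖v‖ / η) := by
  refine (pi_norm_le_iff_of_nonneg (by positivity)).2 fun i => ?_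
  have hv : ∀ j, |v j| ≤ ‖v‖ := fun j => by simpa using norm_le_pi_norm v j
  have hup : logSumExp (fun j => (v j - C i j) / η) ≤ log (Fintype.card κ) + ‖v‖ / η :=
    logSumExp_le_log_card_add fun j =>
      div_le_div_of_nonneg_right (by linarith [hC i j, le_abs_self (v j), hv j]) hη.le
  have hlow : log (Fintype.card κ) + -(‖v‖ / η + M / η) ≤ logSumExp fun j => (v j - C i j) / η :=
    log_card_add_le_logSumExp fun j => by
      rw [← add_div, ← neg_div]
      exact div_le_div_of_nonneg_right (by linarith [hCM i j, neg_abs_le (v j), hv j]) hη.le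
  have ha : |log (a i)| ≤ ‖fun i => log (a i)‖ := by
    simpa using norm_le_pi_norm (fun i => log (a i)) i
  rw [sinkhornStep, norm_mul, Real.norm_of_nonneg (by positivity), Real.norm_eq_abs]
  gcongr
  have := le_max_left (log (Fintype.card κ)) (M / η - log (Fintype.card κ))
  have := le_max_right (log (Fintype.card κ)) (M / η - log (Fintype.card κ))
  rw [abs_le]
  constructor <;> linarith [abs_le.1 ha]

end SinkhornStep

lemma max_norm_le_of_eq_sinkhornStep {ι : Type*} [Fintype ι] [Nonempty ι] {τ η : ℝ}
    (hτ : 0 < τ) (hη : 0 < η) {a b : ι → ℝ} {C : ι → ι → ℝ} {M : ℝ}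
    (hC : ∀ i j, 0 ≤ C i j) (hCM : ∀ i j, C i j ≤ M) {u v : ι → ℝ}
    (hu : u = sinkhornStep τ η a C v) (hv : v = sinkhornStep τ η b (fun j i => C i j) u) :
    max ‖u‖ ‖v‖ ≤ τ * (max ‖fun i => log (a i)‖ ‖fun j => log (b j)‖
      + max (log (Fintype.card ι)) (M / η - log (Fintype.card ι))) := by
  set R := max ‖fun i => log (a i)‖ ‖fun j => log (b j)‖
    + max (log (Fintype.card ι)) (M / η - log (Fintype.card ι))
  set m := max ‖u‖ ‖v‖
  have hm : m ≤ η * τ / (η + τ) * (R + m / η) := by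
    refine max_le ?_ ?_
    · calc ‖u‖ = ‖sinkhornStep τ η a C v‖ := congrArg norm hu
        _ ≤ _ := norm_sinkhornStep_le hτ hη hC hCM a v
        _ ≤ η * τ / (η + τ) * (R + m / η) := by
          gcongr
          · exact add_le_add (le_max_left _ _) le_rfl
          · exact le_max_right _ _
    · calc ‖v‖ = ‖sinkhornStep τ η b (fun j i => C i j) u‖ := congrArg norm hv
        _ ≤ _ := norm_sinkhornStep_le hτ hη (fun j i => hC i j) (fun j i => hCM i j) b u
        _ ≤ η * τ / (η + τ) * (R + m / η) := by
          gcongr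
          · exact add_le_add (le_max_right _ _) le_rfl
          · exact le_max_left _ _
  have hητ : 0 < η + τ := by linarith
  have hexpand : η * τ * (R + m / η) = η * (τ * R) + τ * m := by field_simp
  rw [div_mul_eq_mul_div, le_div_iff₀ hητ, hexpand] at hm
  exact le_of_mul_le_mul_left (by linarith) hη

lemma eq_of_forall_exp_add_exp_le {S α η τ s : ℝ} (hS : 0 < S) (hα : 0 < α) (hη : 0 < η)
    (hτ : 0 < τ)
    (h : ∀ t, η * exp (s / η) * S + τ * (α * exp (-s / τ))
      ≤ η * exp (t / η) * S + τ * (α * exp (-t / τ))) :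
    s = η * τ / (η + τ) * (log α - log S) := by
  have hderiv : HasDerivAt (fun t => η * exp (t / η) * S + τ * (α * exp (-t / τ)))
      (exp (s / η) * S - α * exp (-s / τ)) s := by
    refine (((((hasDerivAt_id' s).div_const η).exp.const_mul η).mul_const S).add
      ((((hasDerivAt_neg s).div_const τ).exp.const_mul α).const_mul τ)).congr_deriv ?_
    field_simp
    ring
  have hmin : IsLocalMin (fun t => η * exp (t / η) * S + τ * (α * exp (-t / τ))) s :=
    Filter.Eventually.of_forall h
  have hcrit : exp (s / η) * S = α * exp (-s / τ) :=
    sub_eq_zero.1 (hmin.hasDerivAt_eq_zero hderiv)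
  have hlog : s / η + log S = log α + -s / τ := by
    simpa [log_mul, hS.ne', hα.ne', exp_ne_zero] using congrArg log hcrit
  field_simp at hlog ⊢
  linear_combination hlog

lemma le_of_forall_sum_le_sum {ι : Type*} [Fintype ι] [DecidableEq ι] {G : ι → ℝ → ℝ}
    {x : ι → ℝ} (h : ∀ y : ι → ℝ, ∑ k, G k (x k) ≤ ∑ k, G k (y k)) (i : ι) (t : ℝ) :
    G i (x i) ≤ G i t := by
  have hupd := h (Function.update x i t)
  simp_rw [Function.apply_update G x] at hupd
  rw [sum_update_of_mem (mem_univ i), sum_eq_add_sum_sdiff_singleton_of_mem (mem_univ i)] at hupd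
  linarith

lemma dualUOT_eq_sum {n : ℕ} (a b : Fin n → ℝ) (C : Fin n → Fin n → ℝ) (τ η : ℝ)
    (u v : Fin n → ℝ) :
    dualUOT a b C τ η u v = ∑ i, (η * exp (u i / η) * ∑ j, exp ((v j - C i j) / η)
      + τ * (a i * exp (-u i / τ))) + τ * ∑ j, b j * exp (-v j / τ) := by
  have hsplit : ∀ i j, exp ((u i + v j - C i j) / η) = exp (u i / η) * exp ((v j - C i j) / η) :=
    fun i j => by rw [← exp_add, add_sub_assoc, add_div]
  simp only [dualUOT, hsplit, sum_add_distrib, mul_sum, mul_assoc]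

lemma dualUOT_swap {n : ℕ} (a b : Fin n → ℝ) (C : Fin n → Fin n → ℝ) (τ η : ℝ)
    (u v : Fin n → ℝ) :
    dualUOT b a (fun j i => C i j) τ η v u = dualUOT a b C τ η u v := by
  simp only [dualUOT]
  rw [sum_comm]
  simp_rw [add_comm (v _) (u _)]
  ring

lemma eq_sinkhornStep_of_forall_le {n : ℕ} {a b : Fin n → ℝ} (ha : ∀ i, 0 < a i)
    (C : Fin n → Fin n → ℝ) {τ η : ℝ} (hτ : 0 < τ) (hη : 0 < η) {u v : Fin n → ℝ}
    (hmin : ∀ p, dualUOT a b C τ η u v ≤ dualUOT a b C τ η p v) :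
    u = sinkhornStep τ η a C v := by
  funext i
  have : Nonempty (Fin n) := ⟨i⟩
  have hsep := le_of_forall_sum_le_sum (G := fun i x => η * exp (x / η)
      * ∑ j, exp ((v j - C i j) / η) + τ * (a i * exp (-x / τ))) (x := u)
    (fun p => by simpa only [dualUOT_eq_sum, add_le_add_iff_right] using hmin p) i
  exact eq_of_forall_exp_add_exp_le (sum_pos (fun j _ => exp_pos _) univ_nonempty) (ha i) hη hτ
    hsep

lemma shifted_update_eq_sinkhornStep {ι κ : Type*} [Fintype κ] [Nonempty κ] (τ η : ℝ)
    (a : ι → ℝ) (C : ι → κ → ℝ) (w : ι → ℝ) (v : κ → ℝ) :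
    (fun i => η * τ / (η + τ) * (w i / η + log (a i)
      - log (∑ j, exp ((w i + v j - C i j) / η)))) = sinkhornStep τ η a C v := by
  funext i
  have hshift := logSumExp_const_add (w i / η) fun j => (v j - C i j) / η
  simp only [logSumExp, ← add_div, ← add_sub_assoc] at hshift
  simp only [sinkhornStep, logSumExp, hshift]
  ring

lemma max_le_pow_mul_of_alternating {x y : ℕ → ℝ} {q : ℝ} (hx : ∀ k, 0 ≤ x k)
    (hy : ∀ k, 0 ≤ y k) (hq0 : 0 ≤ q) (hq1 : q ≤ 1)
    (heven : ∀ k, Even k → x (k + 1) ≤ q * y k ∧ y (k + 1) = y k)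
    (hodd : ∀ k, Odd k → y (k + 1) ≤ q * x k ∧ x (k + 1) = x k) (k : ℕ) :
    max (x (k + 1)) (y (k + 1)) ≤ q ^ k * y 0 := by
  -- `e k` is the error of the component updated last
  set e : ℕ → ℝ := fun k => if Even k then y k else x k
  have he_succ : ∀ k, e (k + 1) ≤ q * e k := fun k => by
    rcases Nat.even_or_odd k with hk | hk
    · simp [e, hk, Nat.even_add_one, (heven k hk).1]
    · simp [e, Nat.not_even_iff_odd.2 hk, hk, (hodd k hk).1]
  have hmax : max (x (k + 1)) (y (k + 1)) ≤ e k := by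
    rcases Nat.even_or_odd k with hk | hk
    · have := (heven k hk).1
      simp only [e, hk, if_true, (heven k hk).2, max_le_iff, le_refl, and_true]
      nlinarith [hy k]
    · have := (hodd k hk).1
      simp only [e, Nat.not_even_iff_odd.2 hk, if_false, (hodd k hk).2, max_le_iff, le_refl,
        true_and]
      nlinarith [hx k]
  simpa [e] using hmax.trans (le_geom hq0 k fun i _ => he_succ i)

theorem stmt_6_general {n : ℕ} (hn : 2 ≤ n) (a b : Fin n → ℝ)
    (ha : ∀ i, 0 < a i) (hb : ∀ j, 0 < b j)
    (C : Fin n → Fin n → ℝ) (hC : ∀ i j, 0 ≤ C i j)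
    (τ η : ℝ) (hτ : 0 < τ) (hη : 0 < η)
    (u v : ℕ → Fin n → ℝ)
    (h0v : v 0 = 0)
    (heven : ∀ k : ℕ, Even k →
      (u (k + 1) = fun i => (η * τ / (η + τ)) *
          (u k i / η + Real.log (a i)
            - Real.log (∑ j, Real.exp ((u k i + v k j - C i j) / η))))
        ∧ v (k + 1) = v k)
    (hodd : ∀ k : ℕ, Odd k →
      (v (k + 1) = fun j => (η * τ / (η + τ)) *
          (v k j / η + Real.log (b j)
            - Real.log (∑ i, Real.exp ((u k i + v k j - C i j) / η))))
        ∧ u (k + 1) = u k)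
    (ustar vstar : Fin n → ℝ)
    (hmin : ∀ p q : Fin n → ℝ, dualUOT a b C τ η ustar vstar ≤ dualUOT a b C τ η p q) :
    ∀ k : ℕ, max ‖u (k + 1) - ustar‖ ‖v (k + 1) - vstar‖
      ≤ τ * (τ / (τ + η)) ^ k *
        (max ‖(fun i => Real.log (a i))‖ ‖(fun j => Real.log (b j))‖
          + max (Real.log n) (‖C‖ / η - Real.log n)) := by
  have : Nonempty (Fin n) := ⟨⟨0, by omega⟩⟩
  have hu_star : ustar = sinkhornStep τ η a C vstar :=
    eq_sinkhornStep_of_forall_le ha C hτ hη fun p => hmin p vstar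
  have hv_star : vstar = sinkhornStep τ η b (fun j i => C i j) ustar :=
    eq_sinkhornStep_of_forall_le hb _ hτ hη fun q => by
      simpa only [dualUOT_swap] using hmin ustar q
  have hC_le : ∀ i j, C i j ≤ ‖C‖ := fun i j =>
    (le_norm_self _).trans ((norm_le_pi_norm (C i) j).trans (norm_le_pi_norm C i))
  have hbound := max_norm_le_of_eq_sinkhornStep hτ hη hC hC_le hu_star hv_star
  rw [Fintype.card_fin] at hbound
  have hu_step : ∀ k, Even k → u (k + 1) = sinkhornStep τ η a C (v k) := fun k hk =>
    (heven k hk).1.trans (shifted_update_eq_sinkhornStep τ η a C (u k) (v k))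
  have hv_step : ∀ k, Odd k → v (k + 1) = sinkhornStep τ η b (fun j i => C i j) (u k) :=
    fun k hk => by
      rw [(hodd k hk).1, ← shifted_update_eq_sinkhornStep τ η b _ (v k) (u k)]
      simp_rw [add_comm (u k _) (v k _)]
  have hcontract := max_le_pow_mul_of_alternating (x := fun k => ‖u k - ustar‖)
    (y := fun k => ‖v k - vstar‖) (q := τ / (τ + η)) (fun _ => norm_nonneg _)
    (fun _ => norm_nonneg _) (by positivity) (div_le_one_of_le₀ (by linarith) (by positivity))
    (fun k hk => ⟨by simpa only [hu_step k hk, hu_star] using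
      norm_sinkhornStep_sub_le hτ hη _ _ _ _, by simp only [(heven k hk).2]⟩)
    (fun k hk => ⟨by simpa only [hv_step k hk, hv_star] using
      norm_sinkhornStep_sub_le hτ hη _ _ _ _, by simp only [(hodd k hk).2]⟩)
  intro k
  calc max ‖u (k + 1) - ustar‖ ‖v (k + 1) - vstar‖ ≤ (τ / (τ + η)) ^ k * ‖v 0 - vstar‖ :=
        hcontract k
    _ ≤ (τ / (τ + η)) ^ k * (τ * _) := by
        rw [h0v, zero_sub, norm_neg]
        gcongr
        exact (le_max_right _ _).trans hbound
    _ = _ := by ring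

/-- Geometric convergence of the Sinkhorn iterates: for every `k ≥ 0`,
`max{‖u^{k+1} − u*‖∞, ‖v^{k+1} − v*‖∞} ≤ τ·(τ/(τ+η))^k·R`, where
`R = max{‖log a‖∞, ‖log b‖∞} + max{log n, ‖C‖∞/η − log n}`. -/
theorem stmt_6 {n : ℕ} (hn : 2 ≤ n) (a b : Fin n → ℝ)
    (ha : ∀ i, 0 < a i) (hb : ∀ j, 0 < b j)
    (C : Fin n → Fin n → ℝ) (hC : ∀ i j, 0 ≤ C i j)
    (τ η : ℝ) (hτ : 0 < τ) (hη : 0 < η)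
    (u v : ℕ → Fin n → ℝ)
    (h0u : u 0 = 0) (h0v : v 0 = 0)
    (heven : ∀ k : ℕ, Even k →
      (u (k + 1) = fun i => (η * τ / (η + τ)) *
          (u k i / η + Real.log (a i)
            - Real.log (∑ j, Real.exp ((u k i + v k j - C i j) / η))))
        ∧ v (k + 1) = v k)
    (hodd : ∀ k : ℕ, Odd k →
      (v (k + 1) = fun j => (η * τ / (η + τ)) *
          (v k j / η + Real.log (b j)
            - Real.log (∑ i, Real.exp ((u k i + v k j - C i j) / η))))
        ∧ u (k + 1) = u k)
    (ustar vstar : Fin n → ℝ)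
    (hmin : ∀ p q : Fin n → ℝ, dualUOT a b C τ η ustar vstar ≤ dualUOT a b C τ η p q) :
    ∀ k : ℕ, max ‖u (k + 1) - ustar‖ ‖v (k + 1) - vstar‖
      ≤ τ * (τ / (τ + η)) ^ k *
        (max ‖(fun i => Real.log (a i))‖ ‖(fun j => Real.log (b j))‖
          + max (Real.log n) (‖C‖ / η - Real.log n)) :=
  stmt_6_general hn a b ha hb C hC τ η hτ hη u v h0v heven hodd ustar vstar hmin
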